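/- arXiv:1304.5492 — 2 statements merged into one kernel-verified Lean document; each statement's English description precedes it below -/
import Mathlib

section
/- For a quasitriangular Hopf algebra H with universal R-matrix R and H-modules U, V, W, the braiding maps C^R satisfy the hexagon-type braid relation: (C^R_{V,W} ⊗ id_U)(id_V ⊗ C^R_{U,W})(C^R_{U,V} ⊗ id_W) = (id_W ⊗ C^R_{U,V})(C^R_{U,W} ⊗ id_V)(id_U ⊗ C^R_{V,W}) as linear maps U ⊗ V ⊗ W → W ⊗ V ⊗ U. In particular, taking U = V = W, the operator C^R_{V,V} is a solution of the braided Yang–Baxter equation on V ⊗ V. -/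
open TensorProduct

section

variable (k : Type*) [CommRing k] (H : Type*) [Ring H] [HopfAlgebra k H]

/-- The opposite coproduct `Δᵒᵖ = τ ∘ Δ`. -/
noncomputable def comulOp : H →ₗ[k] H ⊗[k] H :=
  (TensorProduct.comm k H H).toLinearMap ∘ₗ Coalgebra.comul

/-- `x ⊗ y ↦ (x ⊗ y) ⊗ 1`. -/
noncomputable def emb12 : H ⊗[k] H →ₗ[k] (H ⊗[k] H) ⊗[k] H :=
  (TensorProduct.mk k (H ⊗[k] H) H).flip 1

/-- `x ⊗ y ↦ (x ⊗ 1) ⊗ y`. -/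
noncomputable def emb13 : H ⊗[k] H →ₗ[k] (H ⊗[k] H) ⊗[k] H :=
  TensorProduct.map ((TensorProduct.mk k H H).flip 1) LinearMap.id

/-- `x ⊗ y ↦ (1 ⊗ x) ⊗ y`. -/
noncomputable def emb23 : H ⊗[k] H →ₗ[k] (H ⊗[k] H) ⊗[k] H :=
  TensorProduct.map (TensorProduct.mk k H H 1) LinearMap.id

/-- `R ∈ H ⊗ H` is a universal R-matrix for the quasitriangular Hopf algebra `H`. -/
structure IsUniversalRMatrix (R : H ⊗[k] H) : Prop where
  isUnit : IsUnit R
  intertwine : ∀ x : H, comulOp k H x * R = R * Coalgebra.comul x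
  coproduct_left :
    TensorProduct.map (Coalgebra.comul : H →ₗ[k] H ⊗[k] H) LinearMap.id R =
      emb13 k H R * emb23 k H R
  coproduct_right :
    (TensorProduct.assoc k H H H).symm
        (TensorProduct.map LinearMap.id (Coalgebra.comul : H →ₗ[k] H ⊗[k] H) R) =
      emb13 k H R * emb12 k H R

variable {V W : Type*} [AddCommGroup V] [Module k V] [AddCommGroup W] [Module k W]

/-- The action of `H ⊗ H` on `V ⊗ W`. -/
noncomputable def actTens (ρV : H →ₐ[k] Module.End k V) (ρW : H →ₐ[k] Module.End k W) :
    H ⊗[k] H →ₗ[k] (V ⊗[k] W →ₗ[k] V ⊗[k] W) :=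
  TensorProduct.homTensorHomMap (RingHom.id k) V W V W ∘ₗ
    TensorProduct.map ρV.toLinearMap ρW.toLinearMap

/-- The braiding map `C^R_{V,W}(v ⊗ w) = Σᵢ (tᵢ ▷ w) ⊗ (sᵢ ▷ v)`. -/
noncomputable def braidMap (ρV : H →ₐ[k] Module.End k V) (ρW : H →ₐ[k] Module.End k W)
    (R : H ⊗[k] H) : V ⊗[k] W →ₗ[k] W ⊗[k] V :=
  (TensorProduct.comm k V W).toLinearMap ∘ₗ actTens k H ρV ρW R

end

/-!
Write `R₁₂ = emb12 R`, `R₁₃ = emb13 R`, `R₂₃ = emb23 R`, and let `(H ⊗ H) ⊗ H` act on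
`(U ⊗ V) ⊗ W` factorwise. Each braiding is a flip of two tensor factors composed with the action
of `R₁₂` or `R₂₃`, and moving a flip of modules past the action only permutes the factors of
`(H ⊗ H) ⊗ H` in the same way. Pushing all flips to the left turns the two sides into
`τστ ∘ R₂₃R₁₃R₁₂` and `στσ ∘ R₁₂R₁₃R₂₃`, where `τ` flips the first two and `σ` the last two
factors. Now `τστ = στσ`, and `R₁₂R₁₃R₂₃ = R₂₃R₁₃R₁₂` is the quantum Yang–Baxter equation, which
follows from `(Δ ⊗ id) R = R₁₃R₂₃` and `R Δ(x) = Δᵒᵖ(x) R`.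
-/

section TensorAction

variable {k : Type*} [CommRing k] {X Y Z : Type*} [Ring X] [Algebra k X] [Ring Y] [Algebra k Y]
  [Ring Z] [Algebra k Z] {A B C : Type*} [AddCommGroup A] [Module k A] [AddCommGroup B]
  [Module k B] [AddCommGroup C] [Module k C]

noncomputable def tensorAction (ρ : X →ₐ[k] Module.End k A) (σ : Y →ₐ[k] Module.End k B) :
    X ⊗[k] Y →ₐ[k] Module.End k (A ⊗[k] B) :=
  Module.endTensorEndAlgHom.comp (Algebra.TensorProduct.map ρ σ)

variable (ρA : X →ₐ[k] Module.End k A) (ρB : Y →ₐ[k] Module.End k B)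
  (ρC : Z →ₐ[k] Module.End k C)

@[simp]
lemma tensorAction_tmul (x : X) (y : Y) :
    tensorAction ρA ρB (x ⊗ₜ y) = TensorProduct.map (ρA x) (ρB y) := rfl

lemma tensorAction_rTensor_comm (z : (X ⊗[k] Y) ⊗[k] Z) (a : (A ⊗[k] B) ⊗[k] C) :
    tensorAction (tensorAction ρB ρA) ρC ((TensorProduct.comm k X Y).rTensor Z z)
        ((TensorProduct.comm k A B).rTensor C a) =
      (TensorProduct.comm k A B).rTensor C (tensorAction (tensorAction ρA ρB) ρC z a) := by
  have h : LinearMap.lcomp k _ ((TensorProduct.comm k A B).rTensor C).toLinearMap ∘ₗ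
      (tensorAction (tensorAction ρB ρA) ρC).toLinearMap ∘ₗ
        ((TensorProduct.comm k X Y).rTensor Z).toLinearMap =
      LinearMap.llcomp k _ _ _ ((TensorProduct.comm k A B).rTensor C).toLinearMap ∘ₗ
        (tensorAction (tensorAction ρA ρB) ρC).toLinearMap := by
    ext x y z a b c
    simp
  exact LinearMap.congr_fun (LinearMap.congr_fun h z) a

lemma tensorAction_rightComm (z : (X ⊗[k] Y) ⊗[k] Z) (a : (A ⊗[k] B) ⊗[k] C) :
    tensorAction (tensorAction ρA ρC) ρB (TensorProduct.rightComm k X Y Z z)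
        (TensorProduct.rightComm k A B C a) =
      TensorProduct.rightComm k A B C (tensorAction (tensorAction ρA ρB) ρC z a) := by
  have h : LinearMap.lcomp k _ (TensorProduct.rightComm k A B C).toLinearMap ∘ₗ
      (tensorAction (tensorAction ρA ρC) ρB).toLinearMap ∘ₗ
        (TensorProduct.rightComm k X Y Z).toLinearMap =
      LinearMap.llcomp k _ _ _ (TensorProduct.rightComm k A B C).toLinearMap ∘ₗ
        (tensorAction (tensorAction ρA ρB) ρC).toLinearMap := by
    ext x y z a b c
    simp
  exact LinearMap.congr_fun (LinearMap.congr_fun h z) a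

lemma rTensor_comm_mul (z z' : (X ⊗[k] Y) ⊗[k] Z) :
    (TensorProduct.comm k X Y).rTensor Z (z * z') =
      (TensorProduct.comm k X Y).rTensor Z z * (TensorProduct.comm k X Y).rTensor Z z' :=
  map_mul (Algebra.TensorProduct.congr (Algebra.TensorProduct.comm k X Y) AlgEquiv.refl) z z'

lemma rTensor_comm_rightComm_rTensor_comm (a : (A ⊗[k] B) ⊗[k] C) :
    (TensorProduct.comm k B C).rTensor A (TensorProduct.rightComm k B A C
        ((TensorProduct.comm k A B).rTensor C a)) =
      TensorProduct.rightComm k C A B ((TensorProduct.comm k A C).rTensor B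
        (TensorProduct.rightComm k A B C a)) := by
  have h : ((TensorProduct.comm k A B).rTensor C ≪≫ₗ TensorProduct.rightComm k B A C ≪≫ₗ
      (TensorProduct.comm k B C).rTensor A).toLinearMap =
      (TensorProduct.rightComm k A B C ≪≫ₗ (TensorProduct.comm k A C).rTensor B ≪≫ₗ
        TensorProduct.rightComm k C A B).toLinearMap := by
    ext a b c
    simp
  exact LinearMap.congr_fun h a

end TensorAction

section RMatrix

variable (k : Type*) [CommRing k] (H : Type*) [Ring H] [HopfAlgebra k H]

lemma rTensor_comm_emb13 (r : H ⊗[k] H) :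
    (TensorProduct.comm k H H).rTensor H (emb13 k H r) = emb23 k H r := by
  induction r using TensorProduct.induction_on <;> simp_all [emb13, emb23]

lemma rTensor_comm_emb23 (r : H ⊗[k] H) :
    (TensorProduct.comm k H H).rTensor H (emb23 k H r) = emb13 k H r := by
  induction r using TensorProduct.induction_on <;> simp_all [emb13, emb23]

lemma rightComm_emb12 (r : H ⊗[k] H) :
    TensorProduct.rightComm k H H H (emb12 k H r) = emb13 k H r := by
  induction r using TensorProduct.induction_on <;> simp_all [emb12, emb13]

lemma rightComm_emb13 (r : H ⊗[k] H) :
    TensorProduct.rightComm k H H H (emb13 k H r) = emb12 k H r := by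
  induction r using TensorProduct.induction_on <;> simp_all [emb12, emb13]

variable {k H} {R : H ⊗[k] H}

lemma IsUniversalRMatrix.map_comulOp_id (hR : IsUniversalRMatrix k H R) :
    TensorProduct.map (comulOp k H) LinearMap.id R = emb23 k H R * emb13 k H R := by
  have : TensorProduct.map (comulOp k H) (LinearMap.id : H →ₗ[k] H) =
      ((TensorProduct.comm k H H).rTensor H).toLinearMap ∘ₗ
        TensorProduct.map Coalgebra.comul LinearMap.id := by
    rw [LinearEquiv.coe_rTensor, LinearMap.rTensor_comp_map]
    rfl
  rw [this, LinearMap.comp_apply, hR.coproduct_left, LinearEquiv.coe_coe, rTensor_comm_mul,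
    rTensor_comm_emb13, rTensor_comm_emb23]

lemma IsUniversalRMatrix.emb12_mul_map_comul_id (hR : IsUniversalRMatrix k H R)
    (z : H ⊗[k] H) :
    emb12 k H R * TensorProduct.map Coalgebra.comul LinearMap.id z =
      TensorProduct.map (comulOp k H) LinearMap.id z * emb12 k H R := by
  induction z using TensorProduct.induction_on with
  | zero => simp
  | add z z' hz hz' => simp only [map_add, mul_add, add_mul, hz, hz']
  | tmul x y => simp [emb12, hR.intertwine x]

theorem IsUniversalRMatrix.yangBaxter (hR : IsUniversalRMatrix k H R) :
    emb12 k H R * emb13 k H R * emb23 k H R = emb23 k H R * emb13 k H R * emb12 k H R := by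
  rw [mul_assoc, ← hR.coproduct_left, hR.emb12_mul_map_comul_id, hR.map_comulOp_id]

end RMatrix

section Braiding

variable {k : Type*} [CommRing k] {H : Type*} [Ring H] [HopfAlgebra k H]
  {A B C : Type*} [AddCommGroup A] [Module k A] [AddCommGroup B] [Module k B]
  [AddCommGroup C] [Module k C]
  (ρA : H →ₐ[k] Module.End k A) (ρB : H →ₐ[k] Module.End k B) (ρC : H →ₐ[k] Module.End k C)
  (R : H ⊗[k] H)

lemma braidMap_eq_comm_comp :
    braidMap k H ρA ρB R = (TensorProduct.comm k A B).toLinearMap ∘ₗ tensorAction ρA ρB R :=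
  rfl

lemma rTensor_braidMap :
    TensorProduct.map (braidMap k H ρA ρB R) (LinearMap.id : C →ₗ[k] C) =
      ((TensorProduct.comm k A B).rTensor C).toLinearMap ∘ₗ
        tensorAction (tensorAction ρA ρB) ρC (emb12 k H R) := by
  rw [braidMap_eq_comm_comp, emb12, LinearMap.flip_apply, TensorProduct.mk_apply,
    tensorAction_tmul, map_one, Module.End.one_eq_id, LinearEquiv.coe_rTensor,
    LinearMap.rTensor_comp_map]

lemma lTensor_braidMap :
    TensorProduct.map (LinearMap.id : A →ₗ[k] A) (braidMap k H ρB ρC R) =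
      (TensorProduct.assoc k A C B).toLinearMap ∘ₗ (TensorProduct.rightComm k A B C).toLinearMap ∘ₗ
        tensorAction (tensorAction ρA ρB) ρC (emb23 k H R) ∘ₗ
          (TensorProduct.assoc k A B C).symm.toLinearMap := by
  rw [braidMap_eq_comm_comp]
  induction R using TensorProduct.induction_on with
  | zero => simp
  | add r r' hr hr' =>
    simp only [map_add, LinearMap.comp_add, LinearMap.add_comp, TensorProduct.map_add_right,
      hr, hr']
  | tmul s t =>
    ext a b c
    simp [emb23]

lemma tensorAction_emb12_rightComm (a : (A ⊗[k] B) ⊗[k] C) :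
    tensorAction (tensorAction ρA ρC) ρB (emb12 k H R) (TensorProduct.rightComm k A B C a) =
      TensorProduct.rightComm k A B C (tensorAction (tensorAction ρA ρB) ρC (emb13 k H R) a) := by
  rw [← rightComm_emb13, tensorAction_rightComm]

lemma tensorAction_emb13_rightComm (a : (A ⊗[k] B) ⊗[k] C) :
    tensorAction (tensorAction ρA ρC) ρB (emb13 k H R) (TensorProduct.rightComm k A B C a) =
      TensorProduct.rightComm k A B C (tensorAction (tensorAction ρA ρB) ρC (emb12 k H R) a) := by
  rw [← rightComm_emb12, tensorAction_rightComm]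

lemma tensorAction_emb13_rTensor_comm (a : (A ⊗[k] B) ⊗[k] C) :
    tensorAction (tensorAction ρB ρA) ρC (emb13 k H R) ((TensorProduct.comm k A B).rTensor C a) =
      (TensorProduct.comm k A B).rTensor C
        (tensorAction (tensorAction ρA ρB) ρC (emb23 k H R) a) := by
  rw [← rTensor_comm_emb23, tensorAction_rTensor_comm]

lemma tensorAction_emb23_rTensor_comm (a : (A ⊗[k] B) ⊗[k] C) :
    tensorAction (tensorAction ρB ρA) ρC (emb23 k H R) ((TensorProduct.comm k A B).rTensor C a) =
      (TensorProduct.comm k A B).rTensor C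
        (tensorAction (tensorAction ρA ρB) ρC (emb13 k H R) a) := by
  rw [← rTensor_comm_emb13, tensorAction_rTensor_comm]

end Braiding

theorem braidMap_braid {k : Type*} [CommRing k] {H : Type*} [Ring H] [HopfAlgebra k H]
    {U V W : Type*} [AddCommGroup U] [Module k U] [AddCommGroup V] [Module k V]
    [AddCommGroup W] [Module k W]
    (ρU : H →ₐ[k] Module.End k U) (ρV : H →ₐ[k] Module.End k V)
    (ρW : H →ₐ[k] Module.End k W) {R : H ⊗[k] H} (hR : IsUniversalRMatrix k H R) :
    (TensorProduct.map (braidMap k H ρV ρW R) (LinearMap.id : U →ₗ[k] U)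
        ∘ₗ (TensorProduct.assoc k V W U).symm.toLinearMap
        ∘ₗ TensorProduct.map (LinearMap.id : V →ₗ[k] V) (braidMap k H ρU ρW R)
        ∘ₗ (TensorProduct.assoc k V U W).toLinearMap
        ∘ₗ TensorProduct.map (braidMap k H ρU ρV R) (LinearMap.id : W →ₗ[k] W)) =
      ((TensorProduct.assoc k W V U).symm.toLinearMap
        ∘ₗ TensorProduct.map (LinearMap.id : W →ₗ[k] W) (braidMap k H ρU ρV R)
        ∘ₗ (TensorProduct.assoc k W U V).toLinearMap
        ∘ₗ TensorProduct.map (braidMap k H ρU ρW R) (LinearMap.id : V →ₗ[k] V)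
        ∘ₗ (TensorProduct.assoc k U W V).symm.toLinearMap
        ∘ₗ TensorProduct.map (LinearMap.id : U →ₗ[k] U) (braidMap k H ρV ρW R)
        ∘ₗ (TensorProduct.assoc k U V W).toLinearMap) := by
  refine LinearMap.ext fun x => ?_
  rw [rTensor_braidMap ρV ρW ρU, lTensor_braidMap ρV ρU ρW, rTensor_braidMap ρU ρV ρW,
    lTensor_braidMap ρW ρU ρV, rTensor_braidMap ρU ρW ρV, lTensor_braidMap ρU ρV ρW]
  simp only [LinearMap.comp_apply, LinearEquiv.coe_coe, LinearEquiv.symm_apply_apply,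
    tensorAction_emb12_rightComm, tensorAction_emb13_rightComm,
    tensorAction_emb13_rTensor_comm, tensorAction_emb23_rTensor_comm]
  rw [rTensor_comm_rightComm_rTensor_comm]
  simp only [← Module.End.mul_apply, ← map_mul, ← mul_assoc, hR.yangBaxter]

/-- For `H`-modules `U`, `V`, `W` over a quasitriangular Hopf algebra `(H, R)`, the braiding
maps satisfy the braid relation
`(C_{V,W} ⊗ 1)(1 ⊗ C_{U,W})(C_{U,V} ⊗ 1) = (1 ⊗ C_{U,V})(C_{U,W} ⊗ 1)(1 ⊗ C_{V,W})`
as maps `U ⊗ V ⊗ W → W ⊗ V ⊗ U` (with the evident associators); in particular, taking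
`U = V = W`, the operator `C^R_{V,V}` is a solution of the braided Yang–Baxter equation. -/
theorem braidMap_braid_relation
    (k : Type*) [CommRing k] (H : Type*) [Ring H] [HopfAlgebra k H]
    {U V W : Type*} [AddCommGroup U] [Module k U] [AddCommGroup V] [Module k V]
    [AddCommGroup W] [Module k W]
    (ρU : H →ₐ[k] Module.End k U) (ρV : H →ₐ[k] Module.End k V)
    (ρW : H →ₐ[k] Module.End k W)
    (R : H ⊗[k] H) (hR : IsUniversalRMatrix k H R) :
    (TensorProduct.map (braidMap k H ρV ρW R) (LinearMap.id : U →ₗ[k] U)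
        ∘ₗ (TensorProduct.assoc k V W U).symm.toLinearMap
        ∘ₗ TensorProduct.map (LinearMap.id : V →ₗ[k] V) (braidMap k H ρU ρW R)
        ∘ₗ (TensorProduct.assoc k V U W).toLinearMap
        ∘ₗ TensorProduct.map (braidMap k H ρU ρV R) (LinearMap.id : W →ₗ[k] W)) =
      ((TensorProduct.assoc k W V U).symm.toLinearMap
        ∘ₗ TensorProduct.map (LinearMap.id : W →ₗ[k] W) (braidMap k H ρU ρV R)
        ∘ₗ (TensorProduct.assoc k W U V).toLinearMap
        ∘ₗ TensorProduct.map (braidMap k H ρU ρW R) (LinearMap.id : V →ₗ[k] V)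
        ∘ₗ (TensorProduct.assoc k U W V).symm.toLinearMap
        ∘ₗ TensorProduct.map (LinearMap.id : U →ₗ[k] U) (braidMap k H ρV ρW R)
        ∘ₗ (TensorProduct.assoc k U V W).toLinearMap) ∧
    (TensorProduct.map (braidMap k H ρV ρV R) (LinearMap.id : V →ₗ[k] V)
        ∘ₗ (TensorProduct.assoc k V V V).symm.toLinearMap
        ∘ₗ TensorProduct.map (LinearMap.id : V →ₗ[k] V) (braidMap k H ρV ρV R)
        ∘ₗ (TensorProduct.assoc k V V V).toLinearMap
        ∘ₗ TensorProduct.map (braidMap k H ρV ρV R) (LinearMap.id : V →ₗ[k] V)) =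
      ((TensorProduct.assoc k V V V).symm.toLinearMap
        ∘ₗ TensorProduct.map (LinearMap.id : V →ₗ[k] V) (braidMap k H ρV ρV R)
        ∘ₗ (TensorProduct.assoc k V V V).toLinearMap
        ∘ₗ TensorProduct.map (braidMap k H ρV ρV R) (LinearMap.id : V →ₗ[k] V)
        ∘ₗ (TensorProduct.assoc k V V V).symm.toLinearMap
        ∘ₗ TensorProduct.map (LinearMap.id : V →ₗ[k] V) (braidMap k H ρV ρV R)
        ∘ₗ (TensorProduct.assoc k V V V).toLinearMap) :=
  ⟨braidMap_braid ρU ρV ρW hR, braidMap_braid ρV ρV ρV hR⟩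
end

section
/- Let τ be the 4×4 flip (swap) matrix [[1,0,0,0],[0,0,1,0],[0,1,0,0],[0,0,0,1]] and R = (1/2)·[[1,1,1,−1],[1,1,−1,1],[1,−1,1,1],[−1,1,1,1]]. Then R' = τR = (1/2)·[[1,1,1,−1],[1,−1,1,1],[1,1,−1,1],[−1,1,1,1]] satisfies the braided Yang–Baxter (braid) relation (I₂ ⊗ R')(R' ⊗ I₂)(I₂ ⊗ R') = (R' ⊗ I₂)(I₂ ⊗ R')(R' ⊗ I₂) as 8×8 matrices, where ⊗ is the Kronecker product and I₂ the 2×2 identity. -/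
open Matrix Kronecker

/-- The 4×4 matrix `R` from the regular representation of the universal R-matrix of `ℂ[ℤ/2]`. -/
noncomputable def Rgate : Matrix (Fin 4) (Fin 4) ℂ :=
  (1 / 2 : ℂ) • !![1, 1, 1, -1; 1, 1, -1, 1; 1, -1, 1, 1; -1, 1, 1, 1]

/-- The flip (swap) matrix `τ` on `ℂ² ⊗ ℂ²`. -/
def flipMat : Matrix (Fin 4) (Fin 4) ℂ :=
  !![1, 0, 0, 0; 0, 0, 1, 0; 0, 1, 0, 0; 0, 0, 0, 1]

/-- `R' = τ R`, acting on two adjacent strands among three,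
as an 8×8 matrix (Kronecker product with the 2×2 identity, indices flattened). -/
noncomputable def RgateOn12 : Matrix (Fin 8) (Fin 8) ℂ :=
  Matrix.reindex finProdFinEquiv finProdFinEquiv
    ((flipMat * Rgate) ⊗ₖ (1 : Matrix (Fin 2) (Fin 2) ℂ))

noncomputable def RgateOn23 : Matrix (Fin 8) (Fin 8) ℂ :=
  Matrix.reindex finProdFinEquiv finProdFinEquiv
    ((1 : Matrix (Fin 2) (Fin 2) ℂ) ⊗ₖ (flipMat * Rgate))

/-!
`R' = ½ A` with `A` an integer matrix. Both Kronecker embeddings commute with scalars and with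
ring homomorphisms, and the braid relation is homogeneous of degree three in `R'`, so it
reduces to the braid relation for `A` over `ℤ`, which is a finite computation.
-/

namespace Matrix

section Semiring

variable {α β : Type*} [Semiring α] [Semiring β]

def actOn12 (M : Matrix (Fin 4) (Fin 4) α) : Matrix (Fin 8) (Fin 8) α :=
  reindex finProdFinEquiv finProdFinEquiv (M ⊗ₖ (1 : Matrix (Fin 2) (Fin 2) α))

def actOn23 (M : Matrix (Fin 4) (Fin 4) α) : Matrix (Fin 8) (Fin 8) α :=
  reindex finProdFinEquiv finProdFinEquiv ((1 : Matrix (Fin 2) (Fin 2) α) ⊗ₖ M)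

def SatisfiesBraidRelation (M : Matrix (Fin 4) (Fin 4) α) : Prop :=
  actOn23 M * actOn12 M * actOn23 M = actOn12 M * actOn23 M * actOn12 M

theorem actOn12_map (f : α →+* β) (M : Matrix (Fin 4) (Fin 4) α) :
    actOn12 (M.map f) = (actOn12 M).map f := by
  ext i j
  simp only [actOn12, reindex_apply, submatrix_apply, map_apply, kroneckerMap_apply, one_apply]
  split_ifs <;> simp

theorem actOn23_map (f : α →+* β) (M : Matrix (Fin 4) (Fin 4) α) :
    actOn23 (M.map f) = (actOn23 M).map f := by
  ext i j
  simp only [actOn23, reindex_apply, submatrix_apply, map_apply, kroneckerMap_apply, one_apply]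
  split_ifs <;> simp

theorem SatisfiesBraidRelation.map {M : Matrix (Fin 4) (Fin 4) α}
    (hM : SatisfiesBraidRelation M) (f : α →+* β) : SatisfiesBraidRelation (M.map f) := by
  simp only [SatisfiesBraidRelation, actOn12_map, actOn23_map, ← Matrix.map_mul]
  rw [hM]

end Semiring

section CommSemiring

variable {α : Type*} [CommSemiring α]

theorem actOn12_smul (c : α) (M : Matrix (Fin 4) (Fin 4) α) :
    actOn12 (c • M) = c • actOn12 M := by
  rw [actOn12, actOn12, smul_kronecker]
  rfl

theorem actOn23_smul (c : α) (M : Matrix (Fin 4) (Fin 4) α) :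
    actOn23 (c • M) = c • actOn23 M := by
  rw [actOn23, actOn23, kronecker_smul]
  rfl

theorem SatisfiesBraidRelation.smul {M : Matrix (Fin 4) (Fin 4) α}
    (hM : SatisfiesBraidRelation M) (c : α) : SatisfiesBraidRelation (c • M) := by
  simp only [SatisfiesBraidRelation, actOn12_smul, actOn23_smul, smul_mul_smul]
  rw [hM]

end CommSemiring

end Matrix

def braidMatrix (α : Type*) [Ring α] : Matrix (Fin 4) (Fin 4) α :=
  !![1, 1, 1, -1; 1, -1, 1, 1; 1, 1, -1, 1; -1, 1, 1, 1]

theorem braidMatrix_eq_map_int (α : Type*) [Ring α] :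
    braidMatrix α = (braidMatrix ℤ).map (Int.castRingHom α) := by
  ext i j
  fin_cases i <;> fin_cases j <;> simp [braidMatrix]

theorem satisfiesBraidRelation_braidMatrix_int : SatisfiesBraidRelation (braidMatrix ℤ) := by
  unfold SatisfiesBraidRelation actOn12 actOn23
  decide

theorem flipMat_mul_Rgate : flipMat * Rgate = (1 / 2 : ℂ) • braidMatrix ℂ := by
  ext i j
  fin_cases i <;> fin_cases j <;> simp [flipMat, Rgate, braidMatrix, mul_apply, Fin.sum_univ_four]

/-- `R' = τR` equals the displayed matrix and satisfies the braid relation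
`(I ⊗ R')(R' ⊗ I)(I ⊗ R') = (R' ⊗ I)(I ⊗ R')(R' ⊗ I)`. -/
theorem Rgate'_braid_relation :
    flipMat * Rgate =
      (1 / 2 : ℂ) • !![1, 1, 1, -1; 1, -1, 1, 1; 1, 1, -1, 1; -1, 1, 1, 1] ∧
    RgateOn23 * RgateOn12 * RgateOn23 = RgateOn12 * RgateOn23 * RgateOn12 := by
  have h : SatisfiesBraidRelation (flipMat * Rgate) := by
    rw [flipMat_mul_Rgate, braidMatrix_eq_map_int]
    exact (satisfiesBraidRelation_braidMatrix_int.map _).smul _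
  exact ⟨flipMat_mul_Rgate, h⟩
end
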